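/- arXiv:2405.14275 — 6 statements merged into one kernel-verified Lean document; each statement's English description precedes it below -/
import Mathlib

section
/- The language L(H_k^sign) of words generated by the signed Hammersley process of order k is closed under taking prefixes: if w is generated by the process, then every prefix of w is also generated by the process. -/
/-- A letter of the alphabet `Γ_k`: a value together with a polarity
(`true` = positive `⁺`, `false` = negative `⁻`). -/
abbrev SLetter := ℕ × Bool

/-- Decrement the first (leftmost) letter of polarity `s` with nonzero value. -/
def decFirst (s : Bool) : List SLetter → List SLetter
  | [] => []
  | (v, t) :: rest =>
      if t = s ∧ v ≠ 0 then (v - 1, t) :: rest else (v, t) :: decFirst s rest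

/-- One step of the signed Hammersley process of order `k`:
insert a letter `(k, s)` (i.e. `k⁺` or `k⁻`) at an arbitrary position, and
decrement the closest nonzero letter of opposite polarity to its right (if any). -/
def HStep (k : ℕ) (w w' : List SLetter) : Prop :=
  ∃ (u v : List SLetter) (s : Bool),
    w = u ++ v ∧ w' = u ++ (k, s) :: decFirst (!s) v

/-- Words generated by the signed Hammersley process of order `k`. -/
inductive HGen (k : ℕ) : List SLetter → Prop
  | nil : HGen k []
  | step {w w' : List SLetter} : HGen k w → HStep k w w' → HGen k w'

theorem take_decFirst (s : Bool) : ∀ (n : ℕ) (v : List SLetter),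
    List.take n (decFirst s v) = decFirst s (List.take n v)
  | 0, v => by cases v <;> simp [decFirst]
  | n + 1, [] => by simp [decFirst]
  | n + 1, (a, t) :: rest => by
    by_cases h : t = s ∧ a ≠ 0 <;>
      simp [decFirst, h, take_decFirst s n rest]

/-- `L(H_k^sign)` is closed under taking prefixes. -/
theorem stmt_1 (k : ℕ) (hk : 1 ≤ k) (w : List SLetter)
    (hw : HGen k w) :
    ∀ p : List SLetter, p <+: w → HGen k p := by
  induction hw with
  | nil =>
    intro p hp
    rw [List.prefix_nil.mp hp]
    exact HGen.nil
  | @step w w' hg hs ih =>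
    intro p hp
    obtain ⟨u, v, s, hweq, hw'eq⟩ := hs
    subst hweq hw'eq
    by_cases hlen : p.length ≤ u.length
    · exact ih p ((List.prefix_of_prefix_length_le hp (u.prefix_append _) hlen).trans (u.prefix_append v))
    · push_neg at hlen
      have hpe : p = List.take p.length (u ++ (k, s) :: decFirst (!s) v) :=
        List.prefix_iff_eq_take.mp hp
      rw [List.take_append, List.take_of_length_le (le_of_lt hlen)] at hpe
      obtain ⟨m, hm⟩ : ∃ m, p.length - u.length = m + 1 :=
        ⟨p.length - u.length - 1, by omega⟩
      rw [hm] at hpe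
      simp only [List.take_succ_cons, take_decFirst] at hpe
      rw [hpe]
      exact HGen.step (ih (u ++ List.take m v)
          ⟨List.drop m v, by simp⟩)
        ⟨u, List.take m v, s, rfl, rfl⟩
end

section
/- For any word z generated by the signed Hammersley process of order k, if λ⁺ (respectively λ⁻) denotes the number of insertions of k⁺ (respectively k⁻) during the construction of z that did not decrement any letter, then |z|_{k⁺} = λ⁺ + Σ_{i≥1} i·|z|_{(k−i)⁻} − Σ_{i≥1} |z|_{(k−i)⁺} and |z|_{k⁻} = λ⁻ + Σ_{i≥1} i·|z|_{(k−i)⁺} − Σ_{i≥1} |z|_{(k−i)⁻}. -/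
/-- The number of occurrences of letter `p` in `z`, as an integer. -/
def cnt (z : List SLetter) (p : SLetter) : ℤ := z.count p

/-- `|z|_{k⁺} − Σ_{i=1}^{k} i·|z|_{(k−i)⁻} + Σ_{i=0}^{k−1} |z|_{i⁺}`. -/
def Dpos (k : ℕ) (z : List SLetter) : ℤ :=
  cnt z (k, true) - ∑ i ∈ Finset.Icc 1 k, (i : ℤ) * cnt z (k - i, false)
    + ∑ i ∈ Finset.range k, cnt z (i, true)

/-- `|z|_{k⁻} − Σ_{i=1}^{k} i·|z|_{(k−i)⁺} + Σ_{i=0}^{k−1} |z|_{i⁻}`. -/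
def Dneg (k : ℕ) (z : List SLetter) : ℤ :=
  cnt z (k, false) - ∑ i ∈ Finset.Icc 1 k, (i : ℤ) * cnt z (k - i, true)
    + ∑ i ∈ Finset.range k, cnt z (i, false)

/-- `z` is `k`-dominant: it starts with `k⁺` or `k⁻`, both inequalities hold,
and the one matching the polarity of the first letter is strict. -/
def Dominant (k : ℕ) (z : List SLetter) : Prop :=
  ∃ (s : Bool) (zs : List SLetter),
    z = (k, s) :: zs ∧ 0 ≤ Dpos k z ∧ 0 ≤ Dneg k z ∧
      (if s then 0 < Dpos k z else 0 < Dneg k z)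

/-- Generation in the signed Hammersley process, additionally tracking the
numbers `λ⁺` (resp. `λ⁻`) of insertions of `k⁺` (resp. `k⁻`) that did not
decrement any letter (an insertion decrements nothing exactly when
`decFirst` leaves the suffix unchanged). -/
inductive HGenL (k : ℕ) : List SLetter → ℕ → ℕ → Prop
  | nil : HGenL k [] 0 0
  | step (u v : List SLetter) (s : Bool) (lp ln : ℕ) :
      HGenL k (u ++ v) lp ln →
      HGenL k (u ++ (k, s) :: decFirst (!s) v)
        (if s = true ∧ decFirst (!s) v = v then lp + 1 else lp)
        (if s = false ∧ decFirst (!s) v = v then ln + 1 else ln)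

lemma cnt_cons (x : SLetter) (l : List SLetter) (p : SLetter) :
    cnt (x :: l) p = cnt l p + if p = x then 1 else 0 := by
  simp only [cnt, List.count_cons]
  by_cases h : p = x
  · subst h; simp
  · have h' : (x == p) = false := beq_eq_false_iff_ne.mpr (fun e => h e.symm)
    simp [h, h']

lemma cnt_append (a b : List SLetter) (p : SLetter) :
    cnt (a ++ b) p = cnt a p + cnt b p := by
  simp [cnt, List.count_append]

lemma decFirst_cases (s : Bool) (v : List SLetter) :
    decFirst s v = v ∨ ∃ (a b : List SLetter) (m : ℕ), m ≠ 0 ∧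
      v = a ++ (m, s) :: b ∧ decFirst s v = a ++ (m - 1, s) :: b := by
  induction v with
  | nil => exact Or.inl rfl
  | cons x rest ih =>
      obtain ⟨xv, xt⟩ := x
      by_cases h : xt = s ∧ xv ≠ 0
      · exact Or.inr ⟨[], rest, xv, h.2, by simp [h.1], by simp [decFirst, h]⟩
      · rcases ih with h1 | ⟨a, b, m, hm, hv, hd⟩
        · exact Or.inl (by simp [decFirst, h, h1])
        · exact Or.inr ⟨(xv, xt) :: a, b, m, hm, by simp [hv], by simp [decFirst, h, hd]⟩

def Pf (k : ℕ) (s : Bool) (f : SLetter → ℤ) : ℤ :=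
  f (k, s) - ∑ i ∈ Finset.Icc 1 k, (i : ℤ) * f (k - i, !s)
    + ∑ i ∈ Finset.Icc 1 k, f (k - i, s)

lemma Pf_add (k : ℕ) (s : Bool) (f g : SLetter → ℤ) :
    Pf k s (fun p => f p + g p) = Pf k s f + Pf k s g := by
  simp [Pf, mul_add, Finset.sum_add_distrib]; ring

lemma sum_ind (k j : ℕ) (hk : 1 ≤ k) (c : ℕ → ℤ) :
    ∑ i ∈ Finset.Icc 1 k, c i * (if k - i = j then 1 else 0)
      = if j < k then c (k - j) else 0 := by
  by_cases hj : j < k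
  · rw [if_pos hj, Finset.sum_eq_single (k - j)]
    · have : k - (k - j) = j := by omega
      simp [this]
    · intro i hi hne
      simp only [Finset.mem_Icc] at hi
      have : k - i ≠ j := by omega
      simp [this]
    · intro h
      exfalso; apply h; simp only [Finset.mem_Icc]; omega
  · rw [if_neg hj, Finset.sum_eq_zero]
    intro i hi
    simp only [Finset.mem_Icc] at hi
    have : k - i ≠ j := by omega
    simp [this]

lemma Pf_single (k : ℕ) (hk : 1 ≤ k) (t b : Bool) :
    Pf k b (fun p => if p = (k, t) then 1 else 0) = if b = t then 1 else 0 := by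
  have h1 : ∀ (b' : Bool) (c : ℕ → ℤ),
      ∑ i ∈ Finset.Icc 1 k, c i * (if ((k - i : ℕ), b') = (k, t) then (1:ℤ) else 0) = 0 := by
    intro b' c
    apply Finset.sum_eq_zero
    intro i hi
    simp only [Finset.mem_Icc] at hi
    have : ((k - i : ℕ), b') ≠ (k, t) := by
      intro h
      have := congrArg Prod.fst h
      simp at this; omega
    simp [this]
  have h2 := h1 b (fun _ => 1)
  simp only [one_mul] at h2
  simp only [Pf]
  rw [h1 (!b) (fun i => (i:ℤ)), h2]
  simp [Prod.ext_iff]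

lemma sum_ind1 (k j : ℕ) (hk : 1 ≤ k) :
    ∑ i ∈ Finset.Icc 1 k, (if k - i = j then (1:ℤ) else 0) = if j < k then 1 else 0 := by
  have := sum_ind k j hk (fun _ => 1)
  simpa using this

lemma sum_diff_id (k m : ℕ) (hk : 1 ≤ k) (hm : 1 ≤ m) (hmk : m ≤ k) :
    ∑ i ∈ Finset.Icc 1 k,
      (i : ℤ) * ((if k - i = m - 1 then (1:ℤ) else 0) - (if k - i = m then 1 else 0)) = 1 := by
  simp only [mul_sub]
  rw [Finset.sum_sub_distrib, sum_ind k (m-1) hk (fun i => (i:ℤ)),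
    sum_ind k m hk (fun i => (i:ℤ))]
  have h1 : m - 1 < k := by omega
  rw [if_pos h1]
  split_ifs <;> omega

lemma sum_diff_one (k m : ℕ) (hk : 1 ≤ k) (hm : 1 ≤ m) (hmk : m ≤ k) :
    ∑ i ∈ Finset.Icc 1 k,
      ((if k - i = m - 1 then (1:ℤ) else 0) - (if k - i = m then 1 else 0))
      = if m = k then 1 else 0 := by
  rw [Finset.sum_sub_distrib, sum_ind1 k (m-1) hk, sum_ind1 k m hk]
  have h1 : m - 1 < k := by omega
  rw [if_pos h1]
  split_ifs <;> omega

lemma Pf_dec (k : ℕ) (hk : 1 ≤ k) (m : ℕ) (hm : 1 ≤ m) (hmk : m ≤ k) (t b : Bool) :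
    Pf k b (fun p => (if p = (m - 1, t) then (1:ℤ) else 0) - (if p = (m, t) then 1 else 0))
      = -(if b = !t then 1 else 0) := by
  have e1 : ∀ (n : ℕ) (b' : Bool),
      ((if ((n : ℕ), b') = (m - 1, t) then (1:ℤ) else 0)
          - (if ((n : ℕ), b') = (m, t) then 1 else 0))
        = if b' = t then ((if n = m - 1 then (1:ℤ) else 0) - (if n = m then 1 else 0))
          else 0 := by
    intro n b'
    by_cases h : b' = t
    · subst h; simp [Prod.ext_iff]
    · simp [Prod.ext_iff, h]
  simp only [Pf, e1]
  cases b <;> cases t <;>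
    simp only [Bool.not_true, Bool.not_false,
      show (true = true) = True from by simp, show (false = false) = True from by simp,
      show (true = false) = False from by simp, show (false = true) = False from by simp,
      if_true, if_false, mul_zero, Finset.sum_const_zero, neg_zero, sub_zero,
      zero_sub, zero_add, add_zero, neg_neg]
  · rw [sum_diff_one k m hk hm hmk]
    have : ¬(k = m - 1) := by omega
    rw [if_neg this]
    split_ifs <;> omega
  · rw [sum_diff_id k m hk hm hmk]
  · rw [sum_diff_id k m hk hm hmk]
  · rw [sum_diff_one k m hk hm hmk]
    have : ¬(k = m - 1) := by omega
    rw [if_neg this]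
    split_ifs <;> omega

lemma hgen_main (k : ℕ) (hk : 1 ≤ k) {z : List SLetter} {lp ln : ℕ}
    (h : HGenL k z lp ln) :
    (∀ p ∈ z, p.1 ≤ k) ∧ Pf k true (cnt z) = lp ∧ Pf k false (cnt z) = ln := by
  induction h with
  | nil => refine ⟨by simp, ?_, ?_⟩ <;> simp [Pf, cnt]
  | step u v s lp ln h ih =>
      obtain ⟨hmem, hp, hn⟩ := ih
      rcases decFirst_cases (!s) v with hd | ⟨a, b, m, hm0, hv, hd⟩
      · -- no decrement
        have hE : cnt (u ++ (k, s) :: decFirst (!s) v)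
            = fun p => cnt (u ++ v) p + (if p = (k, s) then 1 else 0) := by
          funext p
          rw [hd]
          simp only [cnt_append, cnt_cons]
          ring
        refine ⟨?_, ?_, ?_⟩
        · intro p hp'
          rw [hd] at hp'
          simp only [List.mem_append, List.mem_cons] at hp'
          rcases hp' with h1 | h2 | h3
          · exact hmem p (by simp [h1])
          · simp [h2]
          · exact hmem p (by simp [h3])
        · rw [hE, Pf_add, Pf_single k hk s true, hp]
          cases s <;> simp only [Bool.not_true, Bool.not_false] at hd <;> simp [hd]
        · rw [hE, Pf_add, Pf_single k hk s false, hn]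
          cases s <;> simp only [Bool.not_true, Bool.not_false] at hd <;> simp [hd]
      · -- decrement of (m, !s)
        have hmk : m ≤ k := by
          have : (m, !s) ∈ u ++ v := by rw [hv]; simp
          exact hmem _ this
        have hm1 : 1 ≤ m := Nat.one_le_iff_ne_zero.mpr hm0
        have hne : decFirst (!s) v ≠ v := by
          rw [hd, hv]
          intro hEq
          have h2 := List.append_cancel_left hEq
          have h3 : m - 1 = m := congrArg Prod.fst (List.head_eq_of_cons_eq h2)
          omega
        have hE : cnt (u ++ (k, s) :: decFirst (!s) v)
            = fun p => cnt (u ++ v) p + ((if p = (k, s) then 1 else 0)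
                + ((if p = (m - 1, !s) then 1 else 0) - (if p = (m, !s) then 1 else 0))) := by
          funext p
          rw [hd, hv]
          simp only [cnt_append, cnt_cons]
          ring
        refine ⟨?_, ?_, ?_⟩
        · intro p hp'
          rw [hd] at hp'
          simp only [List.mem_append, List.mem_cons] at hp'
          rcases hp' with h1 | h2 | h3 | h4 | h5
          · exact hmem p (by simp [h1])
          · simp [h2]
          · exact hmem p (by rw [hv]; simp [h3])
          · simp only [h4]; omega
          · exact hmem p (by rw [hv]; simp [h5])
        · rw [hE, Pf_add, Pf_add, Pf_single k hk s true,
            Pf_dec k hk m hm1 hmk (!s) true, hp]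
          cases s <;> simp only [Bool.not_true, Bool.not_false] at hne <;> simp [hne]
        · rw [hE, Pf_add, Pf_add, Pf_single k hk s false,
            Pf_dec k hk m hm1 hmk (!s) false, hn]
          cases s <;> simp only [Bool.not_true, Bool.not_false] at hne <;> simp [hne]

/-- For any word `z` generated by the signed Hammersley process with `λ⁺ = lp`
non-decrementing insertions of `k⁺` and `λ⁻ = ln` non-decrementing insertions
of `k⁻`:
`|z|_{k⁺} = λ⁺ + Σ_{i≥1} i·|z|_{(k−i)⁻} − Σ_{i≥1} |z|_{(k−i)⁺}` and
`|z|_{k⁻} = λ⁻ + Σ_{i≥1} i·|z|_{(k−i)⁺} − Σ_{i≥1} |z|_{(k−i)⁻}`. -/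
theorem stmt_5 (k : ℕ) (hk : 1 ≤ k) (z : List SLetter) (lp ln : ℕ)
    (h : HGenL k z lp ln) :
    cnt z (k, true) =
      (lp : ℤ) + ∑ i ∈ Finset.Icc 1 k, (i : ℤ) * cnt z (k - i, false)
        - ∑ i ∈ Finset.Icc 1 k, cnt z (k - i, true) ∧
    cnt z (k, false) =
      (ln : ℤ) + ∑ i ∈ Finset.Icc 1 k, (i : ℤ) * cnt z (k - i, true)
        - ∑ i ∈ Finset.Icc 1 k, cnt z (k - i, false) := by
  obtain ⟨-, hp, hn⟩ := hgen_main k hk h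
  simp only [Pf, Bool.not_true, Bool.not_false] at hp hn
  constructor
  · linarith
  · linarith
end

section
/- The language L(H_k^sign) of words generated by the signed Hammersley process of order k is the intersection of two deterministic one-counter languages. -/
/-- A deterministic one-counter automaton over alphabet `α`: a deterministic
pushdown automaton whose stack alphabet consists of a single symbol plus a
bottom-of-stack marker, equivalently a finite-state machine with a counter
over `ℕ` whose transitions may depend on whether the counter is zero and
change the counter by a fixed integer amount (the machine rejects if the
counter would become negative). -/
structure OCA (α : Type) where
  Q : Type
  fin : Fintype Q
  init : Q
  accept : Q → Bool
  δ : Q → α → Bool → Q × ℤ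

/-- One step of a deterministic one-counter automaton on configuration
`some (state, counter)`; `none` is the rejecting sink. -/
def OCA.stepFn {α : Type} (M : OCA α) :
    Option (M.Q × ℕ) → α → Option (M.Q × ℕ)
  | none, _ => none
  | some (q, c), a =>
      let t := M.δ q a (decide (c = 0))
      if 0 ≤ (c : ℤ) + t.2 then some (t.1, ((c : ℤ) + t.2).toNat) else none

/-- The language accepted by a deterministic one-counter automaton. -/
def OCA.lang {α : Type} (M : OCA α) : Set (List α) :=
  { w | ∃ (q : M.Q) (c : ℕ),
      w.foldl M.stepFn (some (M.init, 0)) = some (q, c) ∧ M.accept q = true }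

/-- `L` is a deterministic one-counter language. -/
def IsDOCL {α : Type} (L : Set (List α)) : Prop := ∃ M : OCA α, M.lang = L

/-! Read a word as a walk, once for each polarity `t`: a letter of polarity `t` and value `v`
is a step `v - k ≤ 0`, a letter of the other polarity a step `+1`. A word is generated iff its
values are at most `k` and both walks stay nonnegative, and each of these two conditions is
checked by a one-counter automaton whose counter is the height of the walk.

Inserting `k^s` adds a nonnegative step (`0` for `t = s`, `+1` otherwise), and the decrement it
causes lowers a later step by exactly that amount, so the walks stay nonnegative. Conversely,
the first letter of such a word has value `k`; undoing the insertion of its last letter of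
value `k` (incrementing the first letter of opposite polarity to its right, which has value
`< k`) gives a shorter word of the same kind. -/

def NonnegWalk : ℤ → List ℤ → Prop
  | m, [] => 0 ≤ m
  | m, a :: l => 0 ≤ m ∧ NonnegWalk (m + a) l

namespace NonnegWalk

variable {m m' a x : ℤ} {l l' u v r : List ℤ}

theorem nonneg : NonnegWalk m l → 0 ≤ m := by
  cases l <;> simp only [NonnegWalk] <;> tauto

theorem mono (hm : m ≤ m') (h : NonnegWalk m l) : NonnegWalk m' l := by
  induction l generalizing m m' with
  | nil => exact h.trans hm
  | cons a l ih => exact ⟨h.1.trans hm, ih (by linarith) h.2⟩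

theorem of_forall_nonneg (hm : 0 ≤ m) (hl : ∀ a ∈ l, 0 ≤ a) : NonnegWalk m l := by
  induction l generalizing m with
  | nil => exact hm
  | cons a l ih =>
    rw [List.forall_mem_cons] at hl
    exact ⟨hm, ih (add_nonneg hm hl.1) hl.2⟩

theorem append_iff : NonnegWalk m (u ++ v) ↔ NonnegWalk m u ∧ NonnegWalk (m + u.sum) v := by
  induction u generalizing m with
  | nil => simpa [NonnegWalk] using fun h => h.nonneg
  | cons a u ih => simp [NonnegWalk, ih, add_assoc, and_assoc]

theorem add_sum_nonneg (h : NonnegWalk m l) : 0 ≤ m + l.sum :=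
  (append_iff.1 (l.append_nil.symm ▸ h)).2.nonneg

theorem append_left (hl : ∀ m, NonnegWalk m l → NonnegWalk m l') :
    NonnegWalk m (u ++ l) → NonnegWalk m (u ++ l') := by
  simp only [append_iff]
  exact And.imp_right (hl _)

theorem cons_of_nonneg (h : NonnegWalk m l) (ha : 0 ≤ a) : NonnegWalk m (a :: l) :=
  ⟨h.nonneg, h.mono (by linarith)⟩

theorem cons_append_cons_sub (h : NonnegWalk m (v ++ x :: r)) (ha : 0 ≤ a) :
    NonnegWalk m (a :: (v ++ (x - a) :: r)) := by
  obtain ⟨hv, -, hr⟩ := append_iff.1 h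
  exact ⟨hv.nonneg, append_iff.2
    ⟨hv.mono (by linarith), by linarith [hv.add_sum_nonneg], hr.mono (by linarith)⟩⟩

theorem of_cons (h : NonnegWalk m (a :: v)) (hav : a ≤ 0 ∨ ∀ y ∈ v, 0 ≤ y) :
    NonnegWalk m v := by
  rcases hav with ha | hv
  · exact h.2.mono (by linarith)
  · exact of_forall_nonneg h.1 hv

theorem of_cons_append_cons (h : NonnegWalk m (a :: (v ++ x :: r)))
    (hav : a ≤ 0 ∨ ∀ y ∈ v, 0 ≤ y) : NonnegWalk m (v ++ (x + a) :: r) := by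
  obtain ⟨hm, h⟩ := h
  obtain ⟨hv, -, hr⟩ := append_iff.1 h
  have hv' : NonnegWalk m v := of_cons ⟨hm, hv⟩ hav
  exact append_iff.2 ⟨hv', hv'.add_sum_nonneg, hr.mono (by linarith)⟩

end NonnegWalk

/-- State `false` is a rejecting sink, entered on a letter violating `good`; in state `true` the
counter is the current height of the walk with increments `f`. -/
abbrev counterOCA {α : Type} (good : α → Prop) [DecidablePred good] (f : α → ℤ) :
    OCA α where
  Q := Bool
  fin := inferInstance
  init := true
  accept := id
  δ q a _ := if q ∧ good a then (true, f a) else (false, 0)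

section counterOCA

variable {α : Type} {good : α → Prop} [DecidablePred good] {f : α → ℤ}

theorem counterOCA_foldl_none (w : List α) :
    w.foldl (counterOCA good f).stepFn none = none := by
  induction w with
  | nil => rfl
  | cons x w ih => exact ih

theorem counterOCA_foldl_false (w : List α) (c : ℕ) :
    w.foldl (counterOCA good f).stepFn (some (false, c)) = some (false, c) := by
  induction w with
  | nil => rfl
  | cons x w ih => simpa [OCA.stepFn, counterOCA] using ih

theorem counterOCA_foldl_some_true_iff (w : List α) (c : ℕ) :
    (∃ c', w.foldl (counterOCA good f).stepFn (some (true, c)) = some (true, c')) ↔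
      (∀ x ∈ w, good x) ∧ NonnegWalk c (w.map f) := by
  induction w generalizing c with
  | nil => simp [NonnegWalk]
  | cons x w ih =>
    by_cases hx : good x
    · by_cases hc : 0 ≤ (c : ℤ) + f x
      · have hstep : (counterOCA good f).stepFn (some (true, c)) x
            = some (true, ((c : ℤ) + f x).toNat) := by
          simp [OCA.stepFn, counterOCA, hx, hc]
        rw [List.foldl_cons, hstep, ih, Int.toNat_of_nonneg hc]
        simp [NonnegWalk, hx]
      · have hstep : (counterOCA good f).stepFn (some (true, c)) x = none := by
          simp [OCA.stepFn, counterOCA, hx, hc]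
        rw [List.foldl_cons, hstep, counterOCA_foldl_none]
        simp only [List.map_cons, NonnegWalk, reduceCtorEq, exists_false, false_iff]
        exact fun ⟨_, _, h⟩ => hc h.nonneg
    · have hstep : (counterOCA good f).stepFn (some (true, c)) x = some (false, c) := by
        simp [OCA.stepFn, counterOCA, hx]
      rw [List.foldl_cons, hstep, counterOCA_foldl_false]
      simp [hx]

theorem counterOCA_lang :
    (counterOCA good f).lang = {w | (∀ x ∈ w, good x) ∧ NonnegWalk 0 (w.map f)} := by
  ext w
  rw [Set.mem_ofPred_eq, ← Nat.cast_zero, ← counterOCA_foldl_some_true_iff]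
  constructor
  · rintro ⟨q, c, hw, hq⟩
    obtain rfl : q = true := hq
    exact ⟨c, hw⟩
  · rintro ⟨c, hw⟩
    exact ⟨true, c, hw, rfl⟩

theorem isDOCL_nonnegWalk (good : α → Prop) [DecidablePred good] (f : α → ℤ) :
    IsDOCL {w | (∀ x ∈ w, good x) ∧ NonnegWalk 0 (w.map f)} :=
  ⟨counterOCA good f, counterOCA_lang⟩

end counterOCA

theorem exists_eq_append_cons_forall_not {α : Type*} {p : α → Prop} [DecidablePred p]
    {l : List α} (h : ∃ x ∈ l, p x) :
    ∃ u x v, l = u ++ x :: v ∧ p x ∧ ∀ y ∈ v, ¬p y := by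
  cases hf : l.reverse.find? p with
  | none =>
    obtain ⟨x, hx, hpx⟩ := h
    exact absurd hpx (by simpa using List.find?_eq_none.1 hf x (List.mem_reverse.2 hx))
  | some x =>
    obtain ⟨hpx, as, bs, hl, has⟩ := List.find?_eq_some_iff_append.1 hf
    refine ⟨bs.reverse, x, as.reverse, ?_, by simpa using hpx, fun y hy => ?_⟩
    · simpa using congrArg List.reverse hl
    · simpa using has y (List.mem_reverse.1 hy)

theorem decFirst_append {s : Bool} {a : List SLetter} (b : List SLetter)
    (ha : ∀ x ∈ a, ¬(x.2 = s ∧ x.1 ≠ 0)) : decFirst s (a ++ b) = a ++ decFirst s b := by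
  induction a with
  | nil => rfl
  | cons x a ih =>
    rw [List.forall_mem_cons] at ha
    simp only [List.cons_append, decFirst, if_neg ha.1, ih ha.2]

theorem decFirst_eq_self {s : Bool} {v : List SLetter}
    (hv : ∀ x ∈ v, ¬(x.2 = s ∧ x.1 ≠ 0)) :
    decFirst s v = v := by
  simpa [decFirst] using decFirst_append [] hv

theorem decFirst_eq_self_or (s : Bool) (v : List SLetter) :
    decFirst s v = v ∨
      ∃ a c b, v = a ++ (c + 1, s) :: b ∧ decFirst s v = a ++ (c, s) :: b := by
  induction v with
  | nil => exact Or.inl rfl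
  | cons x v ih =>
    obtain ⟨n, t⟩ := x
    by_cases h : t = s ∧ n ≠ 0
    · obtain ⟨rfl, hn⟩ := h
      obtain ⟨c, rfl⟩ := Nat.exists_eq_succ_of_ne_zero hn
      exact Or.inr ⟨[], c, v, rfl, by simp [decFirst]⟩
    · rw [decFirst, if_neg h]
      rcases ih with hv | ⟨a, c, b, rfl, hv⟩
      · exact Or.inl (by rw [hv])
      · exact Or.inr ⟨(n, t) :: a, c, b, rfl, by rw [hv, List.cons_append]⟩

def letterWeight (k : ℕ) (t : Bool) (x : SLetter) : ℤ := if x.2 = t then (x.1 : ℤ) - k else 1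

theorem letterWeight_top_nonneg (k : ℕ) (t s : Bool) : 0 ≤ letterWeight k t (k, s) := by
  unfold letterWeight; split_ifs <;> simp

theorem letterWeight_succ (k c : ℕ) (t s : Bool) :
    letterWeight k t (c + 1, !s) = letterWeight k t (c, !s) + letterWeight k t (k, s) := by
  cases t <;> cases s <;> simp [letterWeight] <;> ring

theorem letterWeight_top_nonpos_or_forall_nonneg (k : ℕ) (t s : Bool) {a : List SLetter}
    (ha : ∀ y ∈ a, y.2 = s) :
    letterWeight k t (k, s) ≤ 0 ∨ ∀ z ∈ a.map (letterWeight k t), 0 ≤ z := by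
  by_cases hts : s = t
  · exact Or.inl (by simp [letterWeight, hts])
  · refine Or.inr ?_
    simp only [List.mem_map, forall_exists_index, and_imp, forall_apply_eq_imp_iff₂]
    intro y hy
    simp [letterWeight, ha y hy, hts]

def Admissible (k : ℕ) (w : List SLetter) : Prop :=
  (∀ x ∈ w, x.1 ≤ k) ∧ ∀ t, NonnegWalk 0 (w.map (letterWeight k t))

namespace Admissible

variable {k : ℕ} {s : Bool} {c : ℕ} {u v a b : List SLetter}

theorem nil : Admissible k [] := ⟨by simp, fun _ => le_rfl⟩

theorem insert (h : Admissible k (u ++ v)) : Admissible k (u ++ (k, s) :: v) := by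
  refine ⟨by simpa [or_imp, forall_and] using h.1, fun t => ?_⟩
  simpa using NonnegWalk.append_left
    (fun _ hv => hv.cons_of_nonneg (letterWeight_top_nonneg k t s)) (by simpa using h.2 t)

theorem insert_dec (h : Admissible k (u ++ (a ++ (c + 1, !s) :: b))) :
    Admissible k (u ++ (k, s) :: (a ++ (c, !s) :: b)) := by
  refine ⟨?_, fun t => ?_⟩
  · have hle := h.1
    simp only [List.forall_mem_append, List.forall_mem_cons] at hle ⊢
    obtain ⟨hu, ha, hc, hb⟩ := hle
    exact ⟨hu, le_rfl, ha, by omega, hb⟩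
  · have := NonnegWalk.append_left
      (fun _ hv => hv.cons_append_cons_sub (letterWeight_top_nonneg k t s)) (by simpa using h.2 t)
    simpa [letterWeight_succ] using this

theorem of_insert (h : Admissible k (u ++ (k, s) :: v)) (hv : ∀ y ∈ v, y.2 = s) :
    Admissible k (u ++ v) := by
  refine ⟨fun x hx => h.1 x ?_, fun t => ?_⟩
  · simp only [List.mem_append, List.mem_cons] at hx ⊢
    tauto
  · simpa using NonnegWalk.append_left
      (fun _ hw => hw.of_cons (letterWeight_top_nonpos_or_forall_nonneg k t s hv))
      (by simpa using h.2 t)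

theorem of_insert_dec (h : Admissible k (u ++ (k, s) :: (a ++ (c, !s) :: b)))
    (ha : ∀ y ∈ a, y.2 = s) (hc : c < k) : Admissible k (u ++ (a ++ (c + 1, !s) :: b)) := by
  refine ⟨?_, fun t => ?_⟩
  · have hle := h.1
    simp only [List.forall_mem_append, List.forall_mem_cons] at hle ⊢
    obtain ⟨hu, -, ha, -, hb⟩ := hle
    exact ⟨hu, ha, by omega, hb⟩
  · have := NonnegWalk.append_left
      (fun _ hw => hw.of_cons_append_cons (letterWeight_top_nonpos_or_forall_nonneg k t s ha))
      (by simpa using h.2 t)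
    simpa [letterWeight_succ] using this

theorem of_hStep {w w' : List SLetter} (h : Admissible k w) (hw : HStep k w w') :
    Admissible k w' := by
  obtain ⟨u, v, s, rfl, rfl⟩ := hw
  rcases decFirst_eq_self_or (!s) v with hv | ⟨a, c, b, rfl, hv⟩
  · rw [hv]; exact h.insert
  · rw [hv]; exact h.insert_dec

theorem exists_fst_eq {w : List SLetter} (h : Admissible k w) (hw : w ≠ []) :
    ∃ x ∈ w, x.1 = k := by
  obtain ⟨x, w, rfl⟩ := List.exists_cons_of_ne_nil hw
  have hle := h.1 x List.mem_cons_self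
  have hge := (h.2 x.2).2.nonneg
  simp only [letterWeight, zero_add, if_true] at hge
  exact ⟨x, List.mem_cons_self, by omega⟩

end Admissible

theorem HGen.admissible {k : ℕ} {w : List SLetter} (h : HGen k w) : Admissible k w := by
  induction h with
  | nil => exact .nil
  | step _ hs ih => exact ih.of_hStep hs

theorem hGen_of_admissible {k : ℕ} (w : List SLetter) (h : Admissible k w) : HGen k w := by
  obtain rfl | hne := eq_or_ne w []
  · exact .nil
  obtain ⟨u, ⟨n, s⟩, v, rfl, hn, hv⟩ :=
    exists_eq_append_cons_forall_not (p := fun y : SLetter => y.1 = k) (h.exists_fst_eq hne)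
  dsimp only at hn
  subst n
  cases hf : v.find? (fun y => y.2 = !s) with
  | none =>
    have hs : ∀ y ∈ v, y.2 = s := by simpa using hf
    refine .step (hGen_of_admissible (u ++ v) (h.of_insert hs)) ⟨u, v, s, rfl, ?_⟩
    rw [decFirst_eq_self fun y hy hy' => by simp [hs y hy] at hy']
  | some y =>
    obtain ⟨hy, a, b, rfl, ha⟩ := List.find?_eq_some_iff_append.1 hf
    obtain ⟨c, t⟩ := y
    obtain rfl : t = !s := by simpa using hy
    have hs : ∀ y ∈ a, y.2 = s := by simpa using ha
    have hc : c < k := lt_of_le_of_ne (h.1 (c, !s) (by simp)) (hv (c, !s) (by simp))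
    refine .step (hGen_of_admissible _ (h.of_insert_dec hs hc)) ⟨u, _, s, rfl, ?_⟩
    rw [decFirst_append _ fun y hy hy' => by simp [hs y hy] at hy', decFirst, if_pos (by simp)]
    rfl
termination_by w.length
decreasing_by all_goals subst_vars; simp

theorem hGen_iff_admissible {k : ℕ} {w : List SLetter} : HGen k w ↔ Admissible k w :=
  ⟨HGen.admissible, hGen_of_admissible w⟩

theorem stmt_8_general (k : ℕ) :
    ∃ L₁ L₂ : Set (List SLetter),
      IsDOCL L₁ ∧ IsDOCL L₂ ∧ { w | HGen k w } = L₁ ∩ L₂ := by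
  refine ⟨_, _, isDOCL_nonnegWalk (fun x => x.1 ≤ k) (letterWeight k true),
    isDOCL_nonnegWalk (fun x => x.1 ≤ k) (letterWeight k false), ?_⟩
  ext w
  simp only [Set.mem_inter_iff, Set.mem_ofPred_eq, hGen_iff_admissible, Admissible,
    Bool.forall_bool]
  tauto

/-- The language of the signed Hammersley process of order `k` is the
intersection of two deterministic one-counter languages. -/
theorem stmt_8 (k : ℕ) (hk : 1 ≤ k) :
    ∃ L₁ L₂ : Set (List SLetter),
      IsDOCL L₁ ∧ IsDOCL L₂ ∧ { w | HGen k w } = L₁ ∩ L₂ :=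
  stmt_8_general k
end

section
/- Let A₁ and A₂ be finite multisets of integers with A₁ dominating A₂, and let x be an integer that appears in both A₁ and A₂ with the same multiplicity k. If A₁′ and A₂′ are obtained by removing all k copies of x from A₁ and A₂ respectively, then A₁′ dominates A₂′. -/
/-- `A` dominates `B`: `|A| ≤ |B|` and for each `i < |A|`, the `i`-th smallest
element of `A` (counting multiplicities) is `≤` the `i`-th smallest element
of `B`. -/
def MDom (A B : Multiset ℤ) : Prop :=
  Multiset.card A ≤ Multiset.card B ∧
    ∀ i : ℕ, i < Multiset.card A →
      (Multiset.sort A (· ≤ ·)).getD i 0 ≤ (Multiset.sort B (· ≤ ·)).getD i 0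

/-!
Domination can be read off the counting functions `t ↦ #{a ∈ A | a ≤ t}`: in a sorted list the
`i`-th entry is `≤ t` exactly when `i` is below the number of entries `≤ t`, so `A` dominates `B`
iff `|A| ≤ |B|` and `min |A| #{b ∈ B | b ≤ t} ≤ #{a ∈ A | a ≤ t}` for every `t`. Both sides of
these inequalities are additive in the multisets, and the criterion survives cancelling a common
summand `C` (when the minimum is `|A| + |C|`, then `|A| ≤ #{a ∈ A | a ≤ t}` because
`#{c ∈ C | c ≤ t} ≤ |C|`). Removing all `k` copies of `x` from both sides is such a cancellation,
with `C` the multiset of `k` copies of `x`.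
-/

theorem List.SortedLE.getElem_le_iff_lt_countP {α : Type*} [LinearOrder α] {l : List α}
    (hl : l.SortedLE) (t : α) {i : ℕ} (hi : i < l.length) :
    l[i] ≤ t ↔ i < l.countP (· ≤ t) := by
  constructor
  · intro hit
    have htake : (l.take (i + 1)).countP (· ≤ t) = i + 1 := by
      rw [List.countP_eq_length.mpr, List.length_take, min_eq_left hi]
      intro a ha
      obtain ⟨j, hj, rfl⟩ := List.mem_iff_getElem.mp ha
      rw [List.getElem_take]
      simpa using (hl.getElem_le_getElem_of_le (by simp at hj; omega)).trans hit
    have := (List.take_sublist (i + 1) l).countP_le (p := (· ≤ t))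
    omega
  · contrapose!
    intro hti
    have hdrop : (l.drop i).countP (· ≤ t) = 0 := by
      rw [List.countP_eq_zero]
      intro a ha
      obtain ⟨j, hj, rfl⟩ := List.mem_iff_getElem.mp ha
      rw [List.getElem_drop]
      simpa using hti.trans_le (hl.getElem_le_getElem_of_le (Nat.le_add_right i j))
    calc l.countP (· ≤ t) = (l.take i).countP (· ≤ t) + (l.drop i).countP (· ≤ t) := by
          rw [← List.countP_append, List.take_append_drop]
      _ ≤ i := by
          rw [hdrop, add_zero]
          exact List.countP_le_length.trans (List.length_take_le _ _)

theorem Multiset.sort_getD_le_iff_lt_countP (A : Multiset ℤ) (t : ℤ) {i : ℕ}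
    (hi : i < Multiset.card A) :
    (A.sort (· ≤ ·)).getD i 0 ≤ t ↔ i < A.countP (· ≤ t) := by
  rw [← Multiset.length_sort (· ≤ ·)] at hi
  rw [List.getD_eq_getElem _ _ hi,
    (A.pairwise_sort _).sortedLE.getElem_le_iff_lt_countP t hi,
    ← Multiset.coe_countP, Multiset.sort_eq]

theorem mdom_iff_countP (A B : Multiset ℤ) :
    MDom A B ↔ Multiset.card A ≤ Multiset.card B ∧
      ∀ t : ℤ, min (Multiset.card A) (B.countP (· ≤ t)) ≤ A.countP (· ≤ t) := by
  refine and_congr_right fun hcard => ⟨fun h t => ?_, fun h i hi => ?_⟩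
  · by_contra! hlt
    set i := A.countP (· ≤ t)
    obtain ⟨hiA, hiB⟩ := lt_min_iff.mp hlt
    have hbi : (B.sort (· ≤ ·)).getD i 0 ≤ t :=
      (B.sort_getD_le_iff_lt_countP t (hiB.trans_le (Multiset.countP_le_card _ _))).mpr hiB
    exact lt_irrefl i ((A.sort_getD_le_iff_lt_countP t hiA).mp ((h i hiA).trans hbi))
  · set t := (B.sort (· ≤ ·)).getD i 0
    have hiB : i < B.countP (· ≤ t) :=
      (B.sort_getD_le_iff_lt_countP t (hi.trans_le hcard)).mp le_rfl
    exact (A.sort_getD_le_iff_lt_countP t hi).mpr ((lt_min hi hiB).trans_le (h t))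

theorem MDom.of_add_right {A B C : Multiset ℤ} (h : MDom (A + C) (B + C)) : MDom A B := by
  rw [mdom_iff_countP] at h ⊢
  obtain ⟨hcard, hcount⟩ := h
  simp only [Multiset.card_add, Multiset.countP_add] at hcard hcount
  refine ⟨by omega, fun t => ?_⟩
  have := hcount t
  have := C.countP_le_card (· ≤ t)
  omega

theorem stmt_11_general (k : ℕ) (A₁ A₂ : Multiset ℤ) (x : ℤ)
    (hc₁ : A₁.count x = k) (hc₂ : A₂.count x = k) (hdom : MDom A₁ A₂) :
    MDom (A₁.filter (· ≠ x)) (A₂.filter (· ≠ x)) := by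
  have hsplit (A : Multiset ℤ) : A.filter (· ≠ x) + Multiset.replicate (A.count x) x = A := by
    rw [← Multiset.filter_eq', add_comm]
    exact Multiset.filter_add_not _ _
  refine MDom.of_add_right (C := Multiset.replicate k x) ?_
  rwa [← hc₁, hsplit, hc₁, ← hc₂, hsplit]

/-- If `A₁` dominates `A₂` and `x` appears in both with the same multiplicity
`k`, then removing all `k` copies of `x` from both preserves domination. -/
theorem stmt_11 (k : ℕ) (hk : 1 ≤ k) (A₁ A₂ : Multiset ℤ) (x : ℤ)
    (hc₁ : A₁.count x = k) (hc₂ : A₂.count x = k) (hdom : MDom A₁ A₂) :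
    MDom (A₁.filter (· ≠ x)) (A₂.filter (· ≠ x)) :=
  stmt_11_general k A₁ A₂ x hc₁ hc₂ hdom
end

section
/- The greedy algorithm, which inserts each element σ(i) of a signed permutation into the free slot with the largest compatible value among all heaps built so far (slots carry a polarity determined by the alternating-sign rule), and starts a new heap when no compatible slot exists, produces a decomposition of (σ,τ) into the minimum possible number of k-ary min-heap-ordered trees. -/
/-!
Exchange argument. Let `g` be greedy and `p` valid, agreeing with `g` before step `i`.
If `g` starts a new tree at `i`, no slot is free there, so `p` starts one too. Otherwise `g`
attaches `i` to the compatible `j₀` of largest value. If `j₀` has children after `i` in `p`,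
the first of them, `i₁`, trades places with `i` (the decomposition `p ∘ (i i₁)`): `i₁` takes
over the slot `i` had, which is legal since that slot's value is at most `σ j₀ < σ i₁` and
`τ i₁ = -τ j₀ = τ i`. If `j₀` has no later child, `i` is simply moved under `j₀`. Neither
move adds a tree, so step by step `p` turns into `g` without gaining trees.
-/

/-- `σ i` may be inserted as a child of `σ j` at step `i` of a heap
decomposition encoded by `parent`: `j` is earlier, `σ j < σ i`, the signs
alternate, and `σ j` has fewer than `k` children so far (a free slot of value
`σ j` and polarity `−τ j = τ i` exists). -/
def Compat (k n : ℕ) (σ : Equiv.Perm (Fin n)) (τ : Fin n → ℤ)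
    (parent : Fin n → Option (Fin n)) (i j : Fin n) : Prop :=
  j < i ∧ σ j < σ i ∧ τ i = -τ j ∧
    (Finset.univ.filter
      (fun i' : Fin n => parent i' = some j ∧ i' < i)).card < k

/-- A valid decomposition of the signed permutation `(σ, τ)` into `k`-ary
min-heap-ordered trees: each element either starts a new tree
(`parent i = none`) or is placed in a compatible slot. -/
def ValidDecomp (k n : ℕ) (σ : Equiv.Perm (Fin n)) (τ : Fin n → ℤ)
    (parent : Fin n → Option (Fin n)) : Prop :=
  ∀ i j : Fin n, parent i = some j → Compat k n σ τ parent i j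

/-- The number of trees of a decomposition. -/
def ntrees (n : ℕ) (parent : Fin n → Option (Fin n)) : ℕ :=
  (Finset.univ.filter (fun i : Fin n => parent i = none)).card

/-- The decomposition produced by the greedy algorithm: whenever a compatible
slot exists, the element is inserted into a compatible slot of largest value
(and a new tree is started only when no compatible slot exists). -/
def GreedyDecomp (k n : ℕ) (σ : Equiv.Perm (Fin n)) (τ : Fin n → ℤ)
    (parent : Fin n → Option (Fin n)) : Prop :=
  ValidDecomp k n σ τ parent ∧
    ∀ i : Fin n, (∃ j, Compat k n σ τ parent i j) →
      ∃ j, parent i = some j ∧ Compat k n σ τ parent i j ∧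
        ∀ j', Compat k n σ τ parent i j' → σ j' ≤ σ j

open Finset

variable {k n : ℕ} {σ : Equiv.Perm (Fin n)} {τ : Fin n → ℤ}
  {p q g : Fin n → Option (Fin n)} {i j j₀ : Fin n}

def childrenBefore (parent : Fin n → Option (Fin n)) (j c : Fin n) : Finset (Fin n) :=
  univ.filter fun x => parent x = some j ∧ x < c

@[simp]
theorem mem_childrenBefore {x c : Fin n} :
    x ∈ childrenBefore p j c ↔ p x = some j ∧ x < c := by
  simp [childrenBefore]

theorem childrenBefore_congr {c : Fin n} (h : ∀ x < c, p x = q x) :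
    childrenBefore p j c = childrenBefore q j c := by
  ext x
  simp only [mem_childrenBefore]
  exact ⟨fun ⟨hx, hxc⟩ => ⟨h x hxc ▸ hx, hxc⟩, fun ⟨hx, hxc⟩ => ⟨(h x hxc).symm ▸ hx, hxc⟩⟩

theorem compat_iff : Compat k n σ τ p i j ↔
    j < i ∧ σ j < σ i ∧ τ i = -τ j ∧ #(childrenBefore p j i) < k :=
  Iff.rfl

theorem compat_congr (h : ∀ x < i, p x = q x) :
    Compat k n σ τ p i j ↔ Compat k n σ τ q i j := by
  rw [compat_iff, compat_iff, childrenBefore_congr h]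

theorem ValidDecomp.card_childrenBefore_le (hp : ValidDecomp k n σ τ p) (j c : Fin n) :
    #(childrenBefore p j c) ≤ k := by
  set S := childrenBefore p j c
  rcases S.eq_empty_or_nonempty with hS | hS
  · simp [hS]
  have hM : S.max' hS ∈ S := S.max'_mem hS
  have hsub : S.erase (S.max' hS) ⊆ childrenBefore p j (S.max' hS) := by
    intro x hx
    rw [mem_erase] at hx
    exact mem_childrenBefore.2
      ⟨(mem_childrenBefore.1 hx.2).1, lt_of_le_of_ne (S.le_max' x hx.2) hx.1⟩
  have hlt := ((compat_iff.1 (hp _ j (mem_childrenBefore.1 hM).1)).2.2.2)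
  have := card_le_card hsub
  rw [card_erase_of_mem hM] at this
  omega

theorem ntrees_comp_perm (e : Equiv.Perm (Fin n)) : ntrees n (p ∘ e) = ntrees n p :=
  card_equiv e (by simp)

theorem ntrees_update_some_le : ntrees n (Function.update p i (some j)) ≤ ntrees n p := by
  refine card_le_card fun x hx => ?_
  rcases eq_or_ne x i with rfl | hxi
  · simp at hx
  · simpa [Function.update_of_ne hxi] using hx

def IsGreedyStep (k n : ℕ) (σ : Equiv.Perm (Fin n)) (τ : Fin n → ℤ)
    (g : Fin n → Option (Fin n)) (i : Fin n) : Prop :=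
  (∀ j, g i = some j → Compat k n σ τ g i j) ∧
    ((∃ j, Compat k n σ τ g i j) →
      ∃ j, g i = some j ∧ Compat k n σ τ g i j ∧ ∀ j', Compat k n σ τ g i j' → σ j' ≤ σ j)

theorem greedyDecomp_iff : GreedyDecomp k n σ τ g ↔ ∀ i, IsGreedyStep k n σ τ g i :=
  ⟨fun hg i => ⟨hg.1 i, hg.2 i⟩, fun hg => ⟨fun i => (hg i).1, fun i => (hg i).2⟩⟩

theorem isGreedyStep_congr (h : ∀ x ≤ i, p x = q x) :
    IsGreedyStep k n σ τ p i ↔ IsGreedyStep k n σ τ q i := by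
  have hc : ∀ j, Compat k n σ τ p i j ↔ Compat k n σ τ q i j :=
    fun _ => compat_congr fun x hx => h x hx.le
  simp only [IsGreedyStep, hc, h i le_rfl]

theorem exists_isGreedyStep_update (g : Fin n → Option (Fin n)) (i : Fin n) :
    ∃ v, IsGreedyStep k n σ τ (Function.update g i v) i := by
  have hc : ∀ v j, Compat k n σ τ (Function.update g i v) i j ↔ Compat k n σ τ g i j :=
    fun v j => compat_congr fun x hx => Function.update_of_ne hx.ne _ _
  by_cases h : ∃ j, Compat k n σ τ g i j
  · classical
    obtain ⟨j, hj⟩ := h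
    obtain ⟨j₀, hj₀, hmax⟩ :=
      exists_max_image (univ.filter (Compat k n σ τ g i)) σ ⟨j, by simpa using hj⟩
    refine ⟨some j₀, fun j' hj' => ?_, fun _ => ⟨j₀, ?_, ?_, fun j' hj' => ?_⟩⟩
    · simp only [Function.update_self, Option.some_inj] at hj'
      exact hj' ▸ (hc _ _).2 (by simpa using hj₀)
    · simp
    · exact (hc _ _).2 (by simpa using hj₀)
    · exact hmax j' (by simpa using (hc _ _).1 hj')
  · refine ⟨none, fun j' hj' => by simp at hj', fun ⟨j', hj'⟩ => ?_⟩
    exact absurd ⟨j', (hc _ _).1 hj'⟩ h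

theorem exists_isGreedyStep_lt (t : ℕ) :
    ∃ g, ∀ i : Fin n, i.val < t → IsGreedyStep k n σ τ g i := by
  induction t with
  | zero => exact ⟨fun _ => none, fun i hi => absurd hi (Nat.not_lt_zero _)⟩
  | succ t ih =>
    obtain ⟨g, hg⟩ := ih
    by_cases ht : t < n
    · let i : Fin n := ⟨t, ht⟩
      obtain ⟨v, hv⟩ := exists_isGreedyStep_update (k := k) (n := n) (σ := σ) (τ := τ) g i
      refine ⟨Function.update g i v, fun i' hi' => ?_⟩
      rcases Nat.lt_succ_iff_lt_or_eq.1 hi' with hlt | heq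
      · have hi'i : i' < i := Fin.lt_def.2 hlt
        refine (isGreedyStep_congr fun x hx => ?_).2 (hg i' hlt)
        exact Function.update_of_ne (hx.trans_lt hi'i).ne v g
      · rwa [show i' = i from Fin.ext heq]
    · exact ⟨g, fun i hi => hg i (by omega)⟩

theorem exists_greedyDecomp : ∃ g, GreedyDecomp k n σ τ g := by
  obtain ⟨g, hg⟩ := exists_isGreedyStep_lt (k := k) (σ := σ) (τ := τ) (t := n)
  exact ⟨g, greedyDecomp_iff.2 fun i => hg i i.isLt⟩

theorem GreedyDecomp.not_compat_of_eq_none (hg : GreedyDecomp k n σ τ g) (hgi : g i = none) :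
    ¬ Compat k n σ τ g i j := fun hj => by
  obtain ⟨_, hj', -⟩ := hg.2 i ⟨j, hj⟩
  simp [hgi] at hj'

theorem GreedyDecomp.le_of_compat (hg : GreedyDecomp k n σ τ g) (hgi : g i = some j₀)
    (hj : Compat k n σ τ g i j) : σ j ≤ σ j₀ := by
  obtain ⟨_, hj', -, hmax⟩ := hg.2 i ⟨j, hj⟩
  rw [hgi, Option.some_inj] at hj'
  exact hj' ▸ hmax j hj

theorem ValidDecomp.update_of_no_later_child (hp : ValidDecomp k n σ τ p)
    (hi : Compat k n σ τ p i j₀) (hlater : ∀ m, p m = some j₀ → m ≤ i) :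
    ValidDecomp k n σ τ (Function.update p i (some j₀)) := by
  intro m j hm
  rcases eq_or_ne m i with rfl | hmi
  · rw [Function.update_self, Option.some_inj] at hm
    subst hm
    exact (compat_congr fun x hx => Function.update_of_ne hx.ne _ _).2 hi
  rw [Function.update_of_ne hmi] at hm
  have hCm := compat_iff.1 (hp m j hm)
  refine compat_iff.2 ⟨hCm.1, hCm.2.1, hCm.2.2.1,
    lt_of_le_of_lt (card_le_card fun x hx => ?_) hCm.2.2.2⟩
  rw [mem_childrenBefore] at hx ⊢
  rcases eq_or_ne x i with rfl | hxi
  · rw [Function.update_self, Option.some_inj] at hx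
    obtain ⟨rfl, hxm⟩ := hx
    exact absurd (hlater m hm) (not_le.2 hxm)
  · rwa [Function.update_of_ne hxi] at hx

theorem card_childrenBefore_comp_swap_le {i₁ m : Fin n} (hi₁ : p i₁ = some j₀) (hii₁ : i < i₁)
    (hmin : ∀ m, p m = some j₀ → i < m → i₁ ≤ m) (hmi₁ : m ≠ i₁) (hm : p m = some j) :
    #(childrenBefore (p ∘ Equiv.swap i i₁) j m) ≤ #(childrenBefore p j m) := by
  refine card_le_card_of_injOn (Equiv.swap i i₁) (fun x hx => ?_) (Equiv.injective _).injOn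
  rw [mem_coe, mem_childrenBefore, Function.comp_apply] at hx
  rw [mem_coe, mem_childrenBefore]
  refine ⟨hx.1, ?_⟩
  rcases eq_or_ne x i with rfl | hxi
  · rw [Equiv.swap_apply_left, hi₁] at hx
    rw [Equiv.swap_apply_left]
    exact lt_of_le_of_ne (hmin m (hm.trans hx.1.symm) hx.2) hmi₁.symm
  rcases eq_or_ne x i₁ with rfl | hxi₁
  · rw [Equiv.swap_apply_right]
    exact hii₁.trans hx.2
  · rw [Equiv.swap_apply_of_ne_of_ne hxi hxi₁]
    exact hx.2

theorem ValidDecomp.compat_comp_swap_right (hp : ValidDecomp k n σ τ p)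
    (hi : Compat k n σ τ p i j₀) (hmax : ∀ j, Compat k n σ τ p i j → σ j ≤ σ j₀)
    (hpi : p i ≠ some j₀) {i₁ : Fin n} (hi₁ : p i₁ = some j₀) (hii₁ : i < i₁)
    (hj : p i = some j) : Compat k n σ τ (p ∘ Equiv.swap i i₁) i₁ j := by
  have hC := compat_iff.1 hi
  have hCj := compat_iff.1 (hp i j hj)
  have hC₁ := compat_iff.1 (hp i₁ j₀ hi₁)
  refine compat_iff.2 ⟨hCj.1.trans hii₁, (hmax j (hp i j hj)).trans_lt hC₁.2.1,
    by rw [hC₁.2.2.1, ← hC.2.2.1, hCj.2.2.1], ?_⟩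
  have hmem : i ∈ childrenBefore p j i₁ := mem_childrenBefore.2 ⟨hj, hii₁⟩
  have hsub : childrenBefore (p ∘ Equiv.swap i i₁) j i₁ ⊆ (childrenBefore p j i₁).erase i := by
    intro x hx
    rw [mem_childrenBefore, Function.comp_apply] at hx
    have hxi : x ≠ i := by
      rintro rfl
      rw [Equiv.swap_apply_left, hi₁] at hx
      exact hpi (hj.trans hx.1.symm)
    rw [Equiv.swap_apply_of_ne_of_ne hxi hx.2.ne] at hx
    exact mem_erase.2 ⟨hxi, mem_childrenBefore.2 hx⟩
  have hcard := card_le_card hsub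
  rw [card_erase_of_mem hmem] at hcard
  have := hp.card_childrenBefore_le j i₁
  have := card_pos.2 ⟨i, hmem⟩
  omega

theorem ValidDecomp.comp_swap_of_first_later_child (hp : ValidDecomp k n σ τ p)
    (hi : Compat k n σ τ p i j₀) (hmax : ∀ j, Compat k n σ τ p i j → σ j ≤ σ j₀)
    (hpi : p i ≠ some j₀) {i₁ : Fin n} (hi₁ : p i₁ = some j₀) (hii₁ : i < i₁)
    (hmin : ∀ m, p m = some j₀ → i < m → i₁ ≤ m) :
    ValidDecomp k n σ τ (p ∘ Equiv.swap i i₁) := by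
  intro m j hm
  rw [Function.comp_apply] at hm
  rcases eq_or_ne m i with rfl | hmi
  · rw [Equiv.swap_apply_left, hi₁, Option.some_inj] at hm
    subst hm
    refine (compat_congr fun x hx => ?_).2 hi
    rw [Function.comp_apply, Equiv.swap_apply_of_ne_of_ne hx.ne (hx.trans hii₁).ne]
  rcases eq_or_ne m i₁ with rfl | hmi₁
  · rw [Equiv.swap_apply_right] at hm
    exact hp.compat_comp_swap_right hi hmax hpi hi₁ hii₁ hm
  rw [Equiv.swap_apply_of_ne_of_ne hmi hmi₁] at hm
  have hCm := compat_iff.1 (hp m j hm)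
  exact compat_iff.2 ⟨hCm.1, hCm.2.1, hCm.2.2.1,
    (card_childrenBefore_comp_swap_le hi₁ hii₁ hmin hmi₁ hm).trans_lt hCm.2.2.2⟩

theorem ValidDecomp.exists_reassign (hp : ValidDecomp k n σ τ p)
    (hi : Compat k n σ τ p i j₀) (hmax : ∀ j, Compat k n σ τ p i j → σ j ≤ σ j₀) :
    ∃ p', ValidDecomp k n σ τ p' ∧ p' i = some j₀ ∧ (∀ m < i, p' m = p m) ∧
      ntrees n p' ≤ ntrees n p := by
  by_cases hpi : p i = some j₀
  · exact ⟨p, hp, hpi, fun _ _ => rfl, le_rfl⟩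
  by_cases hlater : ∃ m, p m = some j₀ ∧ i < m
  · obtain ⟨i₁, ⟨hi₁, hii₁⟩, hmin⟩ :=
      WellFounded.has_min wellFounded_lt {m | p m = some j₀ ∧ i < m} hlater
    refine ⟨p ∘ Equiv.swap i i₁,
      hp.comp_swap_of_first_later_child hi hmax hpi hi₁ hii₁
        fun m hm him => not_lt.1 (hmin m ⟨hm, him⟩),
      by simp [hi₁], fun m hm => ?_, (ntrees_comp_perm _).le⟩
    rw [Function.comp_apply, Equiv.swap_apply_of_ne_of_ne hm.ne (hm.trans hii₁).ne]
  · simp only [not_exists, not_and, not_lt] at hlater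
    exact ⟨Function.update p i (some j₀), hp.update_of_no_later_child hi hlater,
      Function.update_self .., fun m hm => Function.update_of_ne hm.ne _ _,
      ntrees_update_some_le⟩

theorem GreedyDecomp.exists_valid_agree_le (hg : GreedyDecomp k n σ τ g)
    (hp : ValidDecomp k n σ τ p) (hagree : ∀ m < i, p m = g m) :
    ∃ p', ValidDecomp k n σ τ p' ∧ (∀ m ≤ i, p' m = g m) ∧ ntrees n p' ≤ ntrees n p := by
  have hcompat : ∀ j, Compat k n σ τ p i j ↔ Compat k n σ τ g i j :=
    fun _ => compat_congr hagree
  cases hgi : g i with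
  | none =>
    have hpi : p i = none := Option.eq_none_iff_forall_ne_some.2 fun j hj =>
      hg.not_compat_of_eq_none hgi ((hcompat j).1 (hp i j hj))
    refine ⟨p, hp, fun m hm => ?_, le_rfl⟩
    rcases hm.lt_or_eq with hm | rfl
    · exact hagree m hm
    · rw [hpi, hgi]
  | some j₀ =>
    obtain ⟨p', hp', hp'i, hp'lt, hle⟩ := hp.exists_reassign ((hcompat j₀).2 (hg.1 i j₀ hgi))
      fun j hj => hg.le_of_compat hgi ((hcompat j).1 hj)
    refine ⟨p', hp', fun m hm => ?_, hle⟩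
    rcases hm.lt_or_eq with hm | rfl
    · rw [hp'lt m hm, hagree m hm]
    · rw [hp'i, hgi]

theorem GreedyDecomp.exists_valid_agree_lt (hg : GreedyDecomp k n σ τ g)
    (hp : ValidDecomp k n σ τ p) (t : ℕ) :
    ∃ p', ValidDecomp k n σ τ p' ∧ (∀ m : Fin n, m.val < t → p' m = g m) ∧
      ntrees n p' ≤ ntrees n p := by
  induction t with
  | zero => exact ⟨p, hp, fun m hm => absurd hm (Nat.not_lt_zero _), le_rfl⟩
  | succ t ih =>
    obtain ⟨p', hp', hagree, hle⟩ := ih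
    by_cases ht : t < n
    · obtain ⟨p'', hp'', hagree', hle'⟩ :=
        hg.exists_valid_agree_le (i := ⟨t, ht⟩) hp' fun m hm => hagree m hm
      exact ⟨p'', hp'', fun m hm => hagree' m (Nat.lt_succ_iff.1 hm), hle'.trans hle⟩
    · exact ⟨p', hp', fun m hm => hagree m (by omega), hle⟩

theorem stmt_14_general (k n : ℕ) (σ : Equiv.Perm (Fin n))
    (τ : Fin n → ℤ) :
    (∃ g : Fin n → Option (Fin n), GreedyDecomp k n σ τ g) ∧
      ∀ g p : Fin n → Option (Fin n),
        GreedyDecomp k n σ τ g → ValidDecomp k n σ τ p →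
          ntrees n g ≤ ntrees n p := by
  refine ⟨exists_greedyDecomp, fun g p hg hp => ?_⟩
  obtain ⟨p', -, hagree, hle⟩ := hg.exists_valid_agree_lt hp n
  obtain rfl : p' = g := funext fun m => hagree m m.isLt
  exact hle

/-- The greedy algorithm produces a decomposition of the signed permutation
`(σ, τ)` into the minimum possible number of `k`-ary min-heap-ordered trees:
a greedy decomposition exists, and any greedy decomposition uses at most as
many trees as any valid decomposition. -/
theorem stmt_14 (k n : ℕ) (hk : 1 ≤ k) (σ : Equiv.Perm (Fin n))
    (τ : Fin n → ℤ) (hτ : ∀ i, τ i = 1 ∨ τ i = -1) :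
    (∃ g : Fin n → Option (Fin n), GreedyDecomp k n σ τ g) ∧
      ∀ g p : Fin n → Option (Fin n),
        GreedyDecomp k n σ τ g → ValidDecomp k n σ τ p →
          ntrees n g ≤ ntrees n p :=
  stmt_14_general k n σ τ
end

section
/- For a word z generated by the signed Hammersley process of order k, the number of trees in the corresponding greedy heap-forest construction equals trees_k(z) = |z|_k − Σ_{i=1}^{k} (i−1)·|z|_{k−i}, where |z|_j = |z|_{j⁺} + |z|_{j⁻}. -/
def gval (k : ℕ) (z : List SLetter) : ℤ :=
  (z.map (fun x => (x.1 : ℤ) - k + 1)).sum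

def rhs (k : ℕ) (z : List SLetter) : ℤ :=
  ((z.count (k, true) : ℤ) + z.count (k, false))
    - ∑ i ∈ Finset.Icc 1 k,
        ((i : ℤ) - 1) *
          ((z.count (k - i, true) : ℤ) + z.count (k - i, false))

lemma gval_append (k : ℕ) (u v : List SLetter) :
    gval k (u ++ v) = gval k u + gval k v := by
  simp [gval]

lemma decFirst_bound (k : ℕ) (s : Bool) (v : List SLetter)
    (hv : ∀ x ∈ v, x.1 ≤ k) : ∀ x ∈ decFirst s v, x.1 ≤ k := by
  induction v with
  | nil => simp [decFirst]
  | cons x rest ih =>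
    obtain ⟨m, t⟩ := x
    by_cases h : t = s ∧ m ≠ 0
    · simp only [decFirst, if_pos h]
      intro y hy
      rcases List.mem_cons.mp hy with h1 | h1
      · subst h1; have := hv (m, t) (by simp); simp at this ⊢; omega
      · exact hv y (by simp [h1])
    · simp only [decFirst, if_neg h]
      intro y hy
      rcases List.mem_cons.mp hy with h1 | h1
      · subst h1; exact hv (m, t) (by simp)
      · exact ih (fun x hx => hv x (by simp [hx])) y h1

lemma decFirst_gval (k : ℕ) (s : Bool) (v : List SLetter) :
    decFirst s v = v ∨ gval k (decFirst s v) = gval k v - 1 := by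
  induction v with
  | nil => left; rfl
  | cons x rest ih =>
    obtain ⟨m, t⟩ := x
    by_cases h : t = s ∧ m ≠ 0
    · right
      simp only [decFirst, if_pos h, gval, List.map_cons, List.sum_cons]
      have : ((m - 1 : ℕ) : ℤ) = (m : ℤ) - 1 := by
        have := h.2; omega
      rw [this]; ring
    · rcases ih with h1 | h1
      · left; simp [decFirst, if_neg h, h1]
      · right
        simp only [decFirst, if_neg h, gval, List.map_cons, List.sum_cons] at *
        omega

lemma main_ind (k : ℕ) (z : List SLetter) (lp ln : ℕ) (h : HGenL k z lp ln) :
    (∀ x ∈ z, x.1 ≤ k) ∧ ((lp : ℤ) + ln) = gval k z := by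
  induction h with
  | nil => simp [gval]
  | step u v s lp ln h ih =>
    obtain ⟨hb, he⟩ := ih
    have hbu : ∀ x ∈ u, x.1 ≤ k := fun x hx => hb x (by simp [hx])
    have hbv : ∀ x ∈ v, x.1 ≤ k := fun x hx => hb x (by simp [hx])
    constructor
    · intro x hx
      rcases List.mem_append.mp hx with h1 | h1
      · exact hbu x h1
      · rcases List.mem_cons.mp h1 with h2 | h2
        · subst h2; simp
        · exact decFirst_bound k (!s) v hbv x h2
    · have hg : gval k (u ++ (k, s) :: decFirst (!s) v)
          = gval k u + 1 + gval k (decFirst (!s) v) := by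
        rw [gval_append]
        simp [gval]; ring
      have hguv : gval k (u ++ v) = gval k u + gval k v := gval_append k u v
      rw [hg]
      rw [hguv] at he
      rcases decFirst_gval k (!s) v with hd | hd
      · rw [hd]
        cases s
        · rw [if_neg (by simp), if_pos (by simp [hd])]
          push_cast; omega
        · rw [if_pos (by simp [hd]), if_neg (by simp)]
          push_cast; omega
      · have hne : decFirst (!s) v ≠ v := by
          intro hc; rw [hc] at hd; omega
        rw [hd, if_neg (fun hc => hne hc.2), if_neg (fun hc => hne hc.2)]
        omega

lemma rhs_cons (k m : ℕ) (hk : 1 ≤ k) (hm : m ≤ k) (t : Bool) (z : List SLetter) :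
    rhs k ((m, t) :: z) = ((m : ℤ) - k + 1) + rhs k z := by
  have key : ∀ j : ℕ, ((if (m, t) = (j, true) then (1:ℤ) else 0)
      + (if (m, t) = (j, false) then 1 else 0)) = if m = j then 1 else 0 := by
    intro j
    cases t <;> by_cases hj : m = j <;> simp [hj, Prod.ext_iff]
  have delta : (if m = k then (1:ℤ) else 0)
      - ∑ i ∈ Finset.Icc 1 k, ((i:ℤ)-1) * (if m = k - i then (1:ℤ) else 0)
      = (m:ℤ) - k + 1 := by
    rcases eq_or_lt_of_le hm with heq | hlt
    · subst heq
      rw [if_pos rfl, Finset.sum_eq_zero, sub_zero]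
      · ring
      · intro i hi
        simp only [Finset.mem_Icc] at hi
        rw [if_neg (by omega), mul_zero]
    · rw [if_neg (by omega), Finset.sum_eq_single (k - m)]
      · rw [if_pos (by omega)]
        have h1 : ((k - m : ℕ) : ℤ) = (k : ℤ) - m := by omega
        rw [h1]; ring
      · intro i hi hne
        simp only [Finset.mem_Icc] at hi
        rw [if_neg (by omega), mul_zero]
      · intro habs
        exact absurd (Finset.mem_Icc.mpr ⟨by omega, by omega⟩) habs
  have expand : ∑ i ∈ Finset.Icc 1 k, ((i:ℤ)-1) *
        ((↑(List.count (k - i, true) z) + (if (m, t) = (k - i, true) then (1:ℤ) else 0))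
          + (↑(List.count (k - i, false) z) + (if (m, t) = (k - i, false) then (1:ℤ) else 0)))
      = (∑ i ∈ Finset.Icc 1 k, ((i:ℤ)-1) *
          (↑(List.count (k - i, true) z) + ↑(List.count (k - i, false) z)))
        + ∑ i ∈ Finset.Icc 1 k, ((i:ℤ)-1) * (if m = k - i then (1:ℤ) else 0) := by
    rw [← Finset.sum_add_distrib]
    refine Finset.sum_congr rfl fun i hi => ?_
    rw [← key (k - i)]
    ring
  unfold rhs
  simp only [List.count_cons, beq_iff_eq]
  push_cast
  linarith [delta, key k, expand]

lemma gval_eq_rhs (k : ℕ) (hk : 1 ≤ k) (z : List SLetter)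
    (hb : ∀ x ∈ z, x.1 ≤ k) : gval k z = rhs k z := by
  induction z with
  | nil => simp [gval, rhs]
  | cons x rest ih =>
    obtain ⟨m, t⟩ := x
    rw [rhs_cons k m hk (hb (m, t) (by simp)) t rest]
    have h1 : gval k ((m, t) :: rest) = ((m:ℤ) - k + 1) + gval k rest := by
      simp [gval]
    rw [h1, ih (fun y hy => hb y (by simp [hy]))]

/-- For a word `z` generated by the signed Hammersley process of order `k`,
the number of trees in the corresponding greedy heap-forest construction,
namely `λ⁺ + λ⁻` (the total number of non-decrementing insertions), equals
`trees_k(z) = |z|_k − Σ_{i=1}^{k} (i−1)·|z|_{k−i}`, where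
`|z|_j = |z|_{j⁺} + |z|_{j⁻}`. -/
theorem stmt_16 (k : ℕ) (hk : 1 ≤ k) (z : List SLetter) (lp ln : ℕ)
    (h : HGenL k z lp ln) :
    ((lp : ℤ) + ln) =
      ((z.count (k, true) : ℤ) + z.count (k, false))
        - ∑ i ∈ Finset.Icc 1 k,
            ((i : ℤ) - 1) *
              ((z.count (k - i, true) : ℤ) + z.count (k - i, false)) := by
  obtain ⟨hb, he⟩ := main_ind k z lp ln h
  rw [he, gval_eq_rhs k hk z hb]
  rfl
end
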